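/- Let $\mathcal{H}_+$ denote the set of $n\times n$ Hermitian positive-definite complex matrices. For any $A \in \mathcal{H}_+$, $\det(A)^{1/n} = \frac{1}{n}\inf\{\operatorname{tr}(AB) : B \in \mathcal{H}_+,\ \det(B) = 1\}$. -/

import Mathlib

/-!
Write `A = S²` with `S = √A`. Then `tr(AB) = tr(SBS)` and `det(SBS) = det A · det B`, and `SBS` is
positive semidefinite, so AM-GM on its eigenvalues gives `tr(AB) ≥ n (det A · det B)^{1/n}`.
Equality is attained at `B = (det A)^{1/n} A⁻¹`.
-/

open scoped ComplexOrder

namespace Matrix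

variable {ι 𝕜 : Type*} [Fintype ι] [DecidableEq ι] [RCLike 𝕜]

theorem PosSemidef.card_mul_det_rpow_le_trace [Nonempty ι] {M : Matrix ι ι 𝕜}
    (hM : M.PosSemidef) :
    (Fintype.card ι : ℝ) * RCLike.re M.det ^ (Fintype.card ι : ℝ)⁻¹ ≤ RCLike.re M.trace := by
  have hcard : (0 : ℝ) < Fintype.card ι := by exact_mod_cast Fintype.card_pos
  have amgm := Real.geom_mean_le_arith_mean Finset.univ 1 hM.1.eigenvalues (fun _ _ ↦ zero_le_one)
    (by simpa using hcard) (fun i _ ↦ hM.eigenvalues_nonneg i)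
  simp only [Pi.one_apply, Real.rpow_one, one_mul, Finset.sum_const, Finset.card_univ,
    nsmul_eq_mul, mul_one] at amgm
  rw [hM.1.det_eq_prod_eigenvalues, hM.1.trace_eq_sum_eigenvalues, ← RCLike.ofReal_prod,
    ← RCLike.ofReal_sum, RCLike.ofReal_re, RCLike.ofReal_re]
  rwa [le_div_iff₀' hcard] at amgm

open scoped MatrixOrder in
theorem PosSemidef.card_mul_det_rpow_le_trace_mul [Nonempty ι] {A B : Matrix ι ι 𝕜}
    (hA : A.PosSemidef) (hB : B.PosSemidef) :
    (Fintype.card ι : ℝ) * RCLike.re (A * B).det ^ (Fintype.card ι : ℝ)⁻¹ ≤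
      RCLike.re (A * B).trace := by
  set S := CFC.sqrt A
  have hS : S.IsHermitian := (nonneg_iff_posSemidef.mp (CFC.sqrt_nonneg A)).1
  have hSS : S * S = A := CFC.sqrt_mul_sqrt_self A hA.nonneg
  have hSBS : (S * B * S).PosSemidef := by
    simpa only [hS.eq] using hB.conjTranspose_mul_mul_same S
  have htrace : (S * B * S).trace = (A * B).trace := by
    rw [trace_mul_comm, ← Matrix.mul_assoc, hSS]
  have hdet : (S * B * S).det = (A * B).det := by
    rw [det_mul, det_mul, det_mul, ← hSS, det_mul]; ring
  simpa only [htrace, hdet] using hSBS.card_mul_det_rpow_le_trace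

theorem PosDef.ofReal_re_det {A : Matrix ι ι 𝕜} (hA : A.PosDef) :
    (RCLike.re A.det : 𝕜) = A.det := by
  rw [hA.1.det_eq_prod_eigenvalues, ← RCLike.ofReal_prod, RCLike.ofReal_re]

theorem PosDef.exists_det_eq_one_trace_mul [Nonempty ι] {A : Matrix ι ι 𝕜} (hA : A.PosDef) :
    ∃ B : Matrix ι ι 𝕜, B.PosDef ∧ B.det = 1 ∧
      (A * B).trace = ((Fintype.card ι * RCLike.re A.det ^ (Fintype.card ι : ℝ)⁻¹ : ℝ) : 𝕜) := by
  set d := RCLike.re A.det ^ (Fintype.card ι : ℝ)⁻¹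
  have hdetA : 0 < RCLike.re A.det := by simpa using RCLike.pos_iff.mp hA.det_pos |>.1
  have hd : 0 < d := by positivity
  have hdn : d ^ Fintype.card ι = RCLike.re A.det := by
    rw [← Real.rpow_natCast, ← Real.rpow_mul hdetA.le, inv_mul_cancel₀ (by positivity),
      Real.rpow_one]
  refine ⟨(d : 𝕜) • A⁻¹, hA.inv.smul (RCLike.ofReal_pos.mpr hd), ?_, ?_⟩
  · rw [det_smul, det_nonsing_inv, ← hA.ofReal_re_det, ← RCLike.ofReal_pow, hdn,
      Ring.inverse_eq_inv, mul_inv_cancel₀ (by exact_mod_cast hdetA.ne')]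
  · rw [Matrix.mul_smul, mul_nonsing_inv _ hA.det_pos.ne'.isUnit, trace_smul, trace_one]
    simp only [smul_eq_mul, map_mul, map_natCast]; ring

theorem PosDef.isLeast_trace_mul [Nonempty ι] {A : Matrix ι ι 𝕜} (hA : A.PosDef) :
    IsLeast {t : ℝ | ∃ B : Matrix ι ι 𝕜, B.PosDef ∧ B.det = 1 ∧ (A * B).trace = t}
      (Fintype.card ι * RCLike.re A.det ^ (Fintype.card ι : ℝ)⁻¹) := by
  refine ⟨hA.exists_det_eq_one_trace_mul, ?_⟩
  rintro t ⟨B, hB, hBdet, hBtr⟩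
  simpa only [det_mul, hBdet, mul_one, hBtr, RCLike.ofReal_re] using
    hA.posSemidef.card_mul_det_rpow_le_trace_mul hB.posSemidef

end Matrix

/-- Gaveau's lemma: for a positive-definite Hermitian `n×n` matrix `A`,
`det(A)^{1/n} = (1/n)·inf{tr(AB) : B Hermitian positive-definite, det B = 1}`. -/
theorem stmt5 (n : ℕ) (hn : 0 < n) (A : Matrix (Fin n) (Fin n) ℂ) (hA : A.PosDef) :
    (A.det.re) ^ ((n : ℝ)⁻¹) =
      (1 / n : ℝ) * sInf { t : ℝ | ∃ B : Matrix (Fin n) (Fin n) ℂ,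
        B.PosDef ∧ B.det = 1 ∧ (A * B).trace = (t : ℂ) } := by
  have : Nonempty (Fin n) := ⟨⟨0, hn⟩⟩
  have hn' : (n : ℝ) ≠ 0 := by positivity
  have hleast := hA.isLeast_trace_mul
  simp only [Fintype.card_fin, RCLike.re_to_complex, RCLike.ofReal, Complex.coe_algebraMap]
    at hleast
  rw [hleast.csInf_eq, one_div, inv_mul_cancel_left₀ hn']
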